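/- arXiv:1411.5847 — 2 statements merged into one kernel-verified Lean document; each statement's English description precedes it below -/
import Mathlib

section
/- Minkowski decomposition of concretization: let q'' be a quadratic vector of dimension p over m noise symbols, and for each k ∈ [p] let e_k be a quadratic form depending only on the single fresh noise symbol with index m+k (a form of type α + β·ε_{m+k}). Then the concretization of the quadratic vector whose k-th component is ext_{0,p}(q''_k) + e_k equals γ(q'') ⊕ Π_{k=1}^p γ(e_k), where ⊕ denotes Minkowski sum and Π the Cartesian product. -/
/-- A quadratic vector of dimension p over m noise symbols. -/
structure QVec (p m : ℕ) where
  c : Fin p → ℝ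
  b : Fin p → Fin m → ℝ
  A : Fin p → Fin m → Fin m → ℝ

/-- Componentwise evaluation. -/
def QVec.eval {p m : ℕ} (q : QVec p m) (ε : Fin m → ℝ) (k : Fin p) : ℝ :=
  q.c k + ∑ i, q.b k i * ε i + ∑ i, ∑ j, q.A k i j * ε i * ε j

/-- Concretization: image of the unit cube. -/
def QVec.gamma {p m : ℕ} (q : QVec p m) : Set (Fin p → ℝ) :=
  {x | ∃ ε : Fin m → ℝ, (∀ i, ε i ∈ Set.Icc (-1 : ℝ) 1) ∧ ∀ k, x k = q.eval ε k}

/-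
The noise symbols of `q''` and the fresh symbols `ε_{m+k}` range independently over `[-1, 1]`,
so a point of the cube `[-1, 1]^(m+p)` is a pair (`Fin.append`) of a point for `q''` and one
point `t_k` per fresh symbol; and each affine form `α + β t` sweeps out exactly
`[α - |β|, α + |β|]` as `t` ranges over `[-1, 1]`.
-/

open Set

theorem image_affine_Icc_neg_one_one (a b : ℝ) :
    (fun t => a + b * t) '' Icc (-1) 1 = Icc (a - |b|) (a + |b|) := by
  ext y
  constructor
  · rintro ⟨t, ht, rfl⟩
    have hbt : |b * t| ≤ |b| := by
      rw [abs_mul]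
      exact mul_le_of_le_one_right (abs_nonneg b) (abs_le.2 ht)
    constructor <;> linarith [abs_le.1 hbt]
  · intro hy
    rcases eq_or_ne b 0 with rfl | hb
    · refine ⟨0, by norm_num, ?_⟩
      simp only [abs_zero, sub_zero, add_zero, Icc_self, mem_singleton_iff] at hy
      simp [hy]
    · refine ⟨(y - a) / b, ?_, by field_simp; ring⟩
      rw [mem_Icc, ← abs_le, abs_div, div_le_one (abs_pos.2 hb), abs_le]
      constructor <;> linarith [hy.1, hy.2]

/-- Lemma (Minkowski decomposition of the concretization of the join):
the concretization of the vector whose k-th component is `ext_{0,p}(q''_k) + (α k + β k · ε_{m+k})`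
is the Minkowski sum of `γ(q'')` with the box `Π_k γ(α k + β k · ε_{m+k})`. -/
theorem gamma_join_minkowski_decomp (p m : ℕ) (q'' : QVec p m) (α β : Fin p → ℝ) :
    {x : Fin p → ℝ | ∃ ε : Fin (m + p) → ℝ, (∀ i, ε i ∈ Set.Icc (-1 : ℝ) 1) ∧
        ∀ k, x k = q''.eval (fun i => ε (Fin.castAdd p i)) k + (α k + β k * ε (Fin.natAdd m k))} =
    {z : Fin p → ℝ | ∃ x ∈ q''.gamma, ∃ y : Fin p → ℝ,
        (∀ k, y k ∈ Set.Icc (α k - |β k|) (α k + |β k|)) ∧ z = x + y} := by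
  ext z
  constructor
  · rintro ⟨ε, hε, hz⟩
    refine ⟨q''.eval (fun i => ε (Fin.castAdd p i)), ⟨_, fun i => hε _, fun _ => rfl⟩,
      fun k => α k + β k * ε (Fin.natAdd m k), fun k => ?_, funext hz⟩
    rw [← image_affine_Icc_neg_one_one]
    exact mem_image_of_mem _ (hε _)
  · rintro ⟨x, ⟨ε, hε, hx⟩, y, hy, rfl⟩
    choose t ht hyt using fun k => (image_affine_Icc_neg_one_one (α k) (β k)).symm ▸ hy k
    refine ⟨Fin.append ε t, (Fin.forall_fin_add _).2 ⟨?_, ?_⟩, fun k => ?_⟩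
    · simpa only [Fin.append_left] using hε
    · simpa only [Fin.append_right] using ht
    · simp only [Fin.append_left, Fin.append_right, Pi.add_apply, hx, hyt]
end

section
/- The concretization of the quadratic vector q with components x = −1 + ε₁ − ε₂ − ε₁² and y = 1 + 2ε₂ + ε₁ε₂ over (ε₁,ε₂) ∈ [-1,1]² is a non-convex subset of ℝ², i.e., γ(q) is not convex. -/
theorem quad_zonotope_not_convex :
    ¬ Convex ℝ {v : ℝ × ℝ | ∃ e₁ ∈ Set.Icc (-1 : ℝ) 1, ∃ e₂ ∈ Set.Icc (-1 : ℝ) 1,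
        v = (-1 + e₁ - e₂ - e₁ ^ 2, 1 + 2 * e₂ + e₁ * e₂)} := by
  intro h
  have hu : ((-4 : ℝ), (2 : ℝ)) ∈ {v : ℝ × ℝ | ∃ e₁ ∈ Set.Icc (-1 : ℝ) 1,
      ∃ e₂ ∈ Set.Icc (-1 : ℝ) 1,
      v = (-1 + e₁ - e₂ - e₁ ^ 2, 1 + 2 * e₂ + e₁ * e₂)} := by
    exact ⟨-1, by norm_num, 1, by norm_num, by norm_num⟩
  have hv : ((-2 : ℝ), (4 : ℝ)) ∈ {v : ℝ × ℝ | ∃ e₁ ∈ Set.Icc (-1 : ℝ) 1,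
      ∃ e₂ ∈ Set.Icc (-1 : ℝ) 1,
      v = (-1 + e₁ - e₂ - e₁ ^ 2, 1 + 2 * e₂ + e₁ * e₂)} := by
    exact ⟨1, by norm_num, 1, by norm_num, by norm_num⟩
  have hmid := h hu hv (by norm_num : (0:ℝ) ≤ (1/2:ℝ)) (by norm_num : (0:ℝ) ≤ (1/2:ℝ))
    (by norm_num)
  obtain ⟨e₁, ⟨h1l, h1r⟩, e₂, ⟨h2l, h2r⟩, heq⟩ := hmid
  have hx : (-3 : ℝ) = -1 + e₁ - e₂ - e₁ ^ 2 := by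
    have := congrArg Prod.fst heq
    simp [Prod.smul_def] at this; linarith
  have hy : (3 : ℝ) = 1 + 2 * e₂ + e₁ * e₂ := by
    have := congrArg Prod.snd heq
    simp [Prod.smul_def] at this; linarith
  nlinarith [sq_nonneg e₁, sq_nonneg (e₁ - 1), sq_nonneg (e₁ + 1), sq_nonneg (e₂ - 1)]
end
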